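/- Conversely, suppose ρ : ℝ_{≥0} × Λ_odd → B is a map of the form ρ(t,θ) = e^{-tH}(1 + θA) with H even, A odd in a ℤ/2-graded Banach algebra B, satisfying the super semigroup law ρ(t,θ)ρ(t',θ') = ρ(t+t'+θθ', θ+θ'). Then H = A². In particular, the representation is completely determined by the single odd element A. -/

import Mathlib

/-!
Only the law at `t = t' = 0` is needed. There `e^{-θθ'H} = 1 - θθ'H` because `θθ'H` squares to
zero, and comparing the `θθ'`-components of the two sides of
`(1 + θA)(1 + θ'A) = (1 - θθ'H)(1 + (θ + θ')A)` gives `θθ'H = θθ'A²`; cancelling the Grassmann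
factor `θθ'` then gives `H = A²`.
-/

theorem NormedSpace.exp_eq_one_add_of_sq_eq_zero (𝕂 : Type*) {𝔸 : Type*} [Field 𝕂] [CharZero 𝕂]
    [Ring 𝔸] [Algebra 𝕂 𝔸] [TopologicalSpace 𝔸] [IsTopologicalRing 𝔸] {x : 𝔸} (hx : x ^ 2 = 0) :
    NormedSpace.exp x = 1 + x := by
  have hpow : ∀ n ∉ Finset.range 2, ((n.factorial : 𝕂)⁻¹ • x ^ n) = 0 := fun n hn => by
    rw [pow_eq_zero_of_le (not_lt.mp (mt Finset.mem_range.mpr hn)) hx, smul_zero]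
  rw [congrFun (NormedSpace.exp_eq_tsum 𝕂) x, tsum_eq_sum hpow]
  simp [Finset.sum_range_succ]

section Grassmann

variable {R : Type*} [Ring R] {θ θ' A H : R}

theorem one_add_mul_mul_one_add_mul_of_anticommute (hθ'A : θ' * A = -(A * θ')) :
    (1 + θ * A) * (1 + θ' * A) = 1 + (θ + θ') * A - θ * θ' * (A * A) := by
  have hcross : θ * A * (θ' * A) = -(θ * θ' * (A * A)) := by
    calc θ * A * (θ' * A) = θ * (A * θ') * A := by noncomm_ring
      _ = -(θ * θ' * (A * A)) := by rw [show A * θ' = -(θ' * A) by rw [hθ'A, neg_neg]]; noncomm_ring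
  calc (1 + θ * A) * (1 + θ' * A) = 1 + (θ + θ') * A + θ * A * (θ' * A) := by noncomm_ring
    _ = _ := by rw [hcross, sub_eq_add_neg]

theorem one_sub_mul_mul_one_add_mul_of_commute (hθ : θ * θ = 0) (hθ' : θ' * θ' = 0)
    (hθθ' : Commute (θ * θ') θ) (hH : Commute (θ * θ') H) :
    (1 - θ * θ' * H) * (1 + (θ + θ') * A) = 1 + (θ + θ') * A - θ * θ' * H := by
  have hvanish : θ * θ' * (θ + θ') = 0 := by
    rw [mul_add, hθθ'.eq, ← mul_assoc, hθ, zero_mul, zero_add, mul_assoc, hθ', mul_zero]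
  calc (1 - θ * θ' * H) * (1 + (θ + θ') * A)
      = 1 + (θ + θ') * A - θ * θ' * H - θ * θ' * H * ((θ + θ') * A) := by noncomm_ring
    _ = 1 + (θ + θ') * A - θ * θ' * H - H * (θ * θ' * (θ + θ')) * A := by
        rw [hH.eq]; noncomm_ring
    _ = _ := by rw [hvanish, mul_zero, zero_mul, sub_zero]

end Grassmann

theorem stmt_3_general {C : Type*} [NormedRing C] [NormedAlgebra ℝ C]
    (B : Subalgebra ℝ C) (H A θ θ' : C)
    (hH : H ∈ B) (hA : A ∈ B)
    (hθ : θ * θ = 0) (hθ' : θ' * θ' = 0)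
    (hθ'A : θ' * A = -(A * θ'))
    (hcentral : ∀ x : C, θ * θ' * x = x * (θ * θ'))
    (hinj : ∀ x ∈ B, ∀ y ∈ B, θ * θ' * x = θ * θ' * y → x = y)
    (hlaw : ∀ t t' : ℝ, 0 ≤ t → 0 ≤ t' →
      (NormedSpace.exp (-(t • H)) * (1 + θ * A)) *
        (NormedSpace.exp (-(t' • H)) * (1 + θ' * A)) =
      NormedSpace.exp (-((t + t') • H + θ * θ' * H)) * (1 + (θ + θ') * A)) :
    H = A * A := by
  have hcomm : ∀ x, Commute (θ * θ') x := hcentral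
  have hθθ' : (θ * θ') ^ 2 = 0 := by
    rw [sq, ← mul_assoc, hcentral θ, ← mul_assoc, hθ, zero_mul, zero_mul]
  have hexp : NormedSpace.exp (-(θ * θ' * H)) = 1 - θ * θ' * H := by
    have hsq : (-(θ * θ' * H)) ^ 2 = 0 := by rw [neg_sq, (hcomm H).mul_pow, hθθ', zero_mul]
    rw [NormedSpace.exp_eq_one_add_of_sq_eq_zero ℝ hsq, ← sub_eq_add_neg]
  have hlaw₀ := hlaw 0 0 le_rfl le_rfl
  simp only [zero_smul, add_zero, zero_add, neg_zero, NormedSpace.exp_zero, one_mul, hexp,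
    one_add_mul_mul_one_add_mul_of_anticommute hθ'A,
    one_sub_mul_mul_one_add_mul_of_commute hθ hθ' (hcomm θ) (hcomm H), sub_right_inj] at hlaw₀
  exact hinj H hH (A * A) (mul_mem hA hA) hlaw₀.symm

/-- Conversely, if `ρ(t,θ) = e^{-tH}(1 + θA)` (with `H` even, `A` odd,
both lying in the "constant" subalgebra `B`, and `θ, θ'` genuine Grassmann parameters,
so that multiplication by `θθ'` is injective on `B`) satisfies the super semigroup law
`ρ(t,θ)ρ(t',θ') = ρ(t + t' + θθ', θ + θ')` for all `t, t' ≥ 0`, then `H = A²`: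
the representation is completely determined by the single odd element `A`. -/
theorem stmt_3 {C : Type*} [NormedRing C] [NormedAlgebra ℝ C] [CompleteSpace C]
    (B : Subalgebra ℝ C) (H A θ θ' : C)
    (hH : H ∈ B) (hA : A ∈ B)
    (hθ : θ * θ = 0) (hθ' : θ' * θ' = 0)
    (hanti : θ * θ' = -(θ' * θ))
    (hθA : θ * A = -(A * θ)) (hθ'A : θ' * A = -(A * θ'))
    (hθH : θ * H = H * θ) (hθ'H : θ' * H = H * θ')
    (hcentral : ∀ x : C, θ * θ' * x = x * (θ * θ'))
    (hinj : ∀ x ∈ B, ∀ y ∈ B, θ * θ' * x = θ * θ' * y → x = y)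
    (hlaw : ∀ t t' : ℝ, 0 ≤ t → 0 ≤ t' →
      (NormedSpace.exp (-(t • H)) * (1 + θ * A)) *
        (NormedSpace.exp (-(t' • H)) * (1 + θ' * A)) =
      NormedSpace.exp (-((t + t') • H + θ * θ' * H)) * (1 + (θ + θ') * A)) :
    H = A * A :=
  stmt_3_general B H A θ θ' hH hA hθ hθ' hθ'A hcentral hinj hlaw
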